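/- arXiv:1401.7504 — 5 statements merged into one kernel-verified Lean document; each statement's English description precedes it below -/
import Mathlib

section
/- Let p₁, p₂, p₃, p₄ ∈ ℂ³ be null lifts with ⟨pᵢ,pⱼ⟩ ≠ 0 for all i ≠ j, and let 𝕏₁, 𝕏₂, 𝕏₃ be the associated cross-ratios. Then |𝕏₂| = |𝕏₁|·|𝕏₃| and 2·|𝕏₁|²·Re(𝕏₃) = |𝕏₁|² + |𝕏₂|² − 2·Re(𝕏₁) − 2·Re(𝕏₂) + 1; in particular (𝕏₁,𝕏₂,𝕏₃) ∈ 𝔛. -/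
/-! Four vectors in `ℂ³` are linearly dependent, so the Gram matrix `(⟨p j, p i⟩)ᵢⱼ` of the four
lifts is singular. The lifts being null, its diagonal vanishes and `det = 0` is a real quartic
identity in the six products `⟨p i, p j⟩`, `i > j`. Divided by `|⟨p 3, p 0⟩ ⟨p 2, p 1⟩|²` it
becomes, for `xᵢ = 𝕏ᵢ`, the identity
`x₁ x̄₁ (x₃ + x̄₃) = x₁ x̄₁ + x₂ x̄₂ - (x₁ + x̄₁) - (x₂ + x̄₂) + 1`, the second equation of `𝔛`.
The first equation only uses `|⟨p, q⟩| = |⟨q, p⟩|`. -/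

noncomputable section

open Complex ComplexConjugate

/-- The Hermitian form of signature (2,1) on ℂ³:
`⟨z,w⟩ = z₁·conj(w₃) + z₂·conj(w₂) + z₃·conj(w₁)`. -/
def herm (z w : Fin 3 → ℂ) : ℂ :=
  z 0 * conj (w 2) + z 1 * conj (w 1) + z 2 * conj (w 0)

/-- A null lift: a nonzero vector with `⟨p,p⟩ = 0`. -/
def IsNullLift (p : Fin 3 → ℂ) : Prop := p ≠ 0 ∧ herm p p = 0

/-- The complex cross-ratio `𝕏(p,q,r,s) = (⟨r,p⟩·⟨s,q⟩)/(⟨s,p⟩·⟨r,q⟩)`. -/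
def crossRatio (p q r s : Fin 3 → ℂ) : ℂ :=
  (herm r p * herm s q) / (herm s p * herm r q)

/-- Membership in Falbel's cross-ratio variety 𝔛. -/
def memX (x₁ x₂ x₃ : ℂ) : Prop :=
  x₁ ≠ 0 ∧ x₂ ≠ 0 ∧ x₃ ≠ 0 ∧
  ‖x₂‖ = ‖x₁‖ * ‖x₃‖ ∧
  2 * (‖x₁‖) ^ 2 * x₃.re =
    (‖x₁‖) ^ 2 + (‖x₂‖) ^ 2 - 2 * x₁.re - 2 * x₂.re + 1

theorem herm_conj_symm (z w : Fin 3 → ℂ) : conj (herm w z) = herm z w := by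
  simp only [herm, map_add, map_mul, Complex.conj_conj]
  ring

theorem norm_herm_comm (z w : Fin 3 → ℂ) : ‖herm z w‖ = ‖herm w z‖ := by
  rw [← herm_conj_symm, Complex.norm_conj]

theorem herm_sum_smul_left {ι : Type*} [Fintype ι] (g : ι → ℂ) (q : ι → Fin 3 → ℂ)
    (w : Fin 3 → ℂ) : herm (∑ i, g i • q i) w = ∑ i, g i * herm (q i) w := by
  simp only [herm, Finset.sum_apply, Pi.smul_apply, smul_eq_mul, Finset.sum_mul,
    ← Finset.sum_add_distrib, mul_add, mul_assoc]

theorem crossRatio_ne_zero {p q r s : Fin 3 → ℂ} (hrp : herm r p ≠ 0) (hsq : herm s q ≠ 0)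
    (hsp : herm s p ≠ 0) (hrq : herm r q ≠ 0) : crossRatio p q r s ≠ 0 :=
  div_ne_zero (mul_ne_zero hrp hsq) (mul_ne_zero hsp hrq)

theorem norm_crossRatio_eq_mul {p q r s : Fin 3 → ℂ} (hrp : herm r p ≠ 0) (hsq : herm s q ≠ 0) :
    ‖crossRatio p r q s‖ = ‖crossRatio p q r s‖ * ‖crossRatio q r p s‖ := by
  have hrp' : ‖herm r p‖ ≠ 0 := norm_ne_zero_iff.2 hrp
  have hsq' : ‖herm s q‖ ≠ 0 := norm_ne_zero_iff.2 hsq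
  simp only [crossRatio, norm_div, norm_mul]
  rw [norm_herm_comm p r, norm_herm_comm q p, norm_herm_comm q r]
  field_simp

def gram {ι : Type*} (p : ι → Fin 3 → ℂ) : Matrix ι ι ℂ :=
  Matrix.of fun i j => herm (p j) (p i)

theorem det_gram_eq_zero {ι : Type*} [Fintype ι] [DecidableEq ι] (p : ι → Fin 3 → ℂ)
    (hcard : 3 < Fintype.card ι) : (gram p).det = 0 := by
  obtain ⟨g, hg, i, hgi⟩ : ∃ g : ι → ℂ, ∑ i, g i • p i = 0 ∧ ∃ i, g i ≠ 0 := by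
    rw [← Fintype.not_linearIndependent_iff]
    intro hli
    simpa using hcard.trans_le hli.fintype_card_le_finrank
  refine Matrix.exists_mulVec_eq_zero_iff.1 ⟨g, fun h => hgi (congrFun h i), ?_⟩
  funext k
  calc (gram p).mulVec g k = herm (∑ i, g i • p i) (p k) := by
        simp only [Matrix.mulVec, dotProduct, gram, Matrix.of_apply, herm_sum_smul_left, mul_comm]
    _ = 0 := by rw [hg]; simp [herm]

theorem gram_fin_four_of_null (p : Fin 4 → Fin 3 → ℂ) (h : ∀ i, herm (p i) (p i) = 0) :
    gram p = !![0, herm (p 1) (p 0), herm (p 2) (p 0), herm (p 3) (p 0);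
      conj (herm (p 1) (p 0)), 0, herm (p 2) (p 1), herm (p 3) (p 1);
      conj (herm (p 2) (p 0)), conj (herm (p 2) (p 1)), 0, herm (p 3) (p 2);
      conj (herm (p 3) (p 0)), conj (herm (p 3) (p 1)), conj (herm (p 3) (p 2)), 0] := by
  ext i j
  fin_cases i <;> fin_cases j <;> simp [gram, h, herm_conj_symm]

theorem det_hermitian_zero_diagonal_fin_four (a b c d e f : ℂ) :
    !![0, a, b, c; conj a, 0, d, e; conj b, conj d, 0, f; conj c, conj e, conj f, 0].det =
      a * conj a * f * conj f + b * conj b * e * conj e + c * conj c * d * conj d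
        - (a * d * f * conj c + c * conj a * conj d * conj f)
        - (a * e * conj b * conj f + b * conj a * f * conj e)
        - (b * e * conj c * conj d + c * d * conj b * conj e) := by
  simp [Matrix.det_succ_row_zero, Fin.sum_univ_succ, Fin.succAbove]
  ring

theorem re_relation_of_conj_relation {x₁ x₂ x₃ : ℂ}
    (h : x₁ * conj x₁ * (x₃ + conj x₃) =
      x₁ * conj x₁ + x₂ * conj x₂ - (x₁ + conj x₁) - (x₂ + conj x₂) + 1) :
    2 * ‖x₁‖ ^ 2 * x₃.re = ‖x₁‖ ^ 2 + ‖x₂‖ ^ 2 - 2 * x₁.re - 2 * x₂.re + 1 := by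
  simp only [Complex.mul_conj, Complex.add_conj] at h
  rw [Complex.sq_norm, Complex.sq_norm]
  have h' : Complex.normSq x₁ * (2 * x₃.re) = Complex.normSq x₁ + Complex.normSq x₂ -
      2 * x₁.re - 2 * x₂.re + 1 := by exact_mod_cast h
  linarith

theorem re_relation_of_det_eq_zero {a b c d e f : ℂ}
    (hb : b ≠ 0) (hc : c ≠ 0) (hd : d ≠ 0) (he : e ≠ 0)
    (hdet : !![0, a, b, c; conj a, 0, d, e; conj b, conj d, 0, f; conj c, conj e, conj f, 0].det = 0) :
    let x₁ := b * e / (c * d)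
    let x₂ := a * f / (c * conj d)
    let x₃ := conj a * f / (e * conj b)
    2 * ‖x₁‖ ^ 2 * x₃.re = ‖x₁‖ ^ 2 + ‖x₂‖ ^ 2 - 2 * x₁.re - 2 * x₂.re + 1 := by
  intro x₁ x₂ x₃
  apply re_relation_of_conj_relation
  have hb' : conj b ≠ 0 := (map_ne_zero _).2 hb
  have hc' : conj c ≠ 0 := (map_ne_zero _).2 hc
  have hd' : conj d ≠ 0 := (map_ne_zero _).2 hd
  have he' : conj e ≠ 0 := (map_ne_zero _).2 he
  rw [det_hermitian_zero_diagonal_fin_four] at hdet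
  simp only [x₁, x₂, x₃, map_div₀, map_mul, Complex.conj_conj]
  field_simp
  linear_combination -hdet

/-- The cross-ratios of a quadruple of null lifts with pairwise nonzero Hermitian
products satisfy the two defining equations of 𝔛; in particular
`(𝕏₁, 𝕏₂, 𝕏₃) ∈ 𝔛`. -/
theorem crossRatios_mem_X (p : Fin 4 → Fin 3 → ℂ)
    (hnull : ∀ i, IsNullLift (p i))
    (hne : ∀ i j, i ≠ j → herm (p i) (p j) ≠ 0) :
    memX (crossRatio (p 0) (p 1) (p 2) (p 3))
         (crossRatio (p 0) (p 2) (p 1) (p 3))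
         (crossRatio (p 1) (p 2) (p 0) (p 3)) := by
  have h (i j : Fin 4) (hij : i ≠ j := by decide) : herm (p i) (p j) ≠ 0 := hne i j hij
  have hdet := det_gram_eq_zero p (by simp)
  rw [gram_fin_four_of_null p fun i => (hnull i).2] at hdet
  refine ⟨crossRatio_ne_zero (h 2 0) (h 3 1) (h 3 0) (h 2 1),
    crossRatio_ne_zero (h 1 0) (h 3 2) (h 3 0) (h 1 2),
    crossRatio_ne_zero (h 0 1) (h 3 2) (h 3 1) (h 0 2),
    norm_crossRatio_eq_mul (h 2 0) (h 3 1), ?_⟩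
  simpa only [crossRatio, herm_conj_symm] using
    re_relation_of_det_eq_zero (h 2 0) (h 3 0) (h 2 1) (h 3 1) hdet
end
end

section
/- For every (x₁,x₂,x₃) ∈ 𝔛 there exist null lifts p₁, p₂, p₃, p₄ ∈ ℂ³, pairwise non-proportional over ℂ and with ⟨pᵢ,pⱼ⟩ ≠ 0 for all i ≠ j, such that 𝕏₁ = x₁, 𝕏₂ = x₂ and 𝕏₃ = x₃. -/
noncomputable section

open Complex ComplexConjugate

/-!
Normalize `p₃ = (0,0,1)`, `p₄ = (1,0,0)` and `p₁ = (A, b₁, 1)`, `p₂ = (B, b₂, 1)`; then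
`𝕏₁ = conj A / conj B`, `𝕏₂ = conj ⟨p₁,p₂⟩ / B` and `𝕏₃ = ⟨p₁,p₂⟩ / A`, and `pₖ` is null
iff `|bₖ|² = -2 Re` of its first coordinate. So take `A = conj x₁ · B` with
`B / conj B = x₁ conj x₃ / x₂` (possible since `|x₂| = |x₁| |x₃|`); it remains to find `b₁, b₂` with
prescribed moduli and `b₁ conj b₂ = A (x₃ - 1) - conj B`. These exist iff `Re A, Re B ≤ 0` and
`|A (x₃ - 1) - conj B|² = 4 Re A Re B`; the identity is the second equation of 𝔛 in disguise,
and the sign of `B` is free, so it can be chosen to make both real parts nonpositive.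
-/

lemma herm_smul_left (c : ℂ) (z w : Fin 3 → ℂ) : herm (c • z) w = c * herm z w := by
  simp only [herm, Pi.smul_apply, smul_eq_mul]
  ring

lemma conj_herm (z w : Fin 3 → ℂ) : conj (herm z w) = herm w z := by
  simp only [herm, map_add, map_mul, conj_conj]
  ring

lemma IsNullLift.ne_smul_of_herm_ne_zero {p q : Fin 3 → ℂ} (hq : IsNullLift q)
    (h : herm p q ≠ 0) (c : ℂ) : p ≠ c • q := by
  rintro rfl
  rw [herm_smul_left, hq.2, mul_zero] at h
  exact h rfl

lemma exists_mul_conj_eq {a b : ℝ} (ha : 0 ≤ a) (hb : 0 ≤ b) {u : ℂ} (hu : normSq u = a * b) :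
    ∃ z w : ℂ, normSq z = a ∧ normSq w = b ∧ z * conj w = u := by
  rcases hb.eq_or_lt with rfl | hb
  · refine ⟨Real.sqrt a, 0, by simp [Real.mul_self_sqrt ha], by simp, ?_⟩
    rw [mul_zero, normSq_eq_zero] at hu
    simp [hu]
  · have hw : (Real.sqrt b : ℂ) ≠ 0 := by exact_mod_cast (Real.sqrt_pos.mpr hb).ne'
    refine ⟨u / Real.sqrt b, Real.sqrt b, ?_, by simp [Real.mul_self_sqrt hb.le], ?_⟩
    · rw [normSq_div, normSq_ofReal, Real.mul_self_sqrt hb.le, hu]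
      field_simp
    · rw [conj_ofReal, div_mul_cancel₀ u hw]

lemma exists_ne_zero_mul_eq_mul_conj {z w : ℂ} (hz : z ≠ 0) (hzw : ‖z‖ = ‖w‖) :
    ∃ B ≠ 0, z * B = w * conj B := by
  have hnorm : z * conj z = w * conj w := by
    simp only [mul_conj, normSq_eq_norm_sq, hzw]
  by_cases h : conj z + w = 0
  · refine ⟨I * (conj z - w), ?_, ?_⟩
    · rw [show w = -conj z by linear_combination h]
      simpa [two_mul] using hz
    · simp only [map_mul, map_sub, conj_I, conj_conj]
      linear_combination I * hnorm
  · exact ⟨conj z + w, h, by simp only [map_add, conj_conj]; linear_combination hnorm⟩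

section CrossRatioVariety

variable {x₁ x₂ x₃ : ℂ}

lemma memX.mul_conj_eq (hx : memX x₁ x₂ x₃) :
    x₂ * conj x₂ = x₁ * conj x₁ * (x₃ * conj x₃) := by
  simp only [mul_conj, normSq_eq_norm_sq, hx.2.2.2.1]
  push_cast
  ring

lemma memX.add_conj_eq (hx : memX x₁ x₂ x₃) :
    x₁ * conj x₁ * (x₃ + conj x₃) =
      x₁ * conj x₁ + x₂ * conj x₂ - (x₁ + conj x₁) - (x₂ + conj x₂) + 1 := by
  simp only [mul_conj, add_conj, normSq_eq_norm_sq]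
  exact_mod_cast by linear_combination hx.2.2.2.2

lemma memX.normSq_sub_eq (hx : memX x₁ x₂ x₃) {B : ℂ}
    (hB : x₂ * B = x₁ * conj x₃ * conj B) :
    normSq (conj x₁ * B * (x₃ - 1) - conj B) = 4 * (conj x₁ * B).re * B.re := by
  have hB' : conj x₂ * conj B = conj x₁ * x₃ * B := by
    simpa using congrArg conj hB
  have key : (conj x₁ * B * (x₃ - 1) - conj B) * conj (conj x₁ * B * (x₃ - 1) - conj B) =
      (conj x₁ * B + conj (conj x₁ * B)) * (B + conj B) := by
    simp only [map_mul, map_sub, map_one, conj_conj]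
    linear_combination B * hB' + conj B * hB + B * conj B * (-hx.mul_conj_eq - hx.add_conj_eq)
  rw [mul_conj, add_conj, add_conj] at key
  norm_cast at key
  linear_combination key

lemma memX.exists_re_nonpos (hx : memX x₁ x₂ x₃) :
    ∃ B ≠ 0, x₂ * B = x₁ * conj x₃ * conj B ∧ (conj x₁ * B).re ≤ 0 ∧ B.re ≤ 0 := by
  obtain ⟨B, hB0, hB⟩ := exists_ne_zero_mul_eq_mul_conj (w := x₁ * conj x₃) hx.2.1
    (by rw [norm_mul, norm_conj, hx.2.2.2.1])
  -- `normSq ≥ 0` forces `Re A` and `Re B` to have the same sign; flip `B` if both are positive.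
  have hprod : 0 ≤ (conj x₁ * B).re * B.re := by
    nlinarith [hx.normSq_sub_eq hB, normSq_nonneg (conj x₁ * B * (x₃ - 1) - conj B)]
  by_cases hsign : (conj x₁ * B).re + B.re ≤ 0
  · exact ⟨B, hB0, hB, by nlinarith, by nlinarith⟩
  · refine ⟨-B, neg_ne_zero.mpr hB0, by rw [map_neg]; linear_combination -hB, ?_, ?_⟩ <;>
      simp only [mul_neg, neg_re] <;> nlinarith

end CrossRatioVariety

/-- A quadruple normalized by `p₃ = (0,0,1)` and `p₄ = (1,0,0)`: the origin and the point at
infinity of the Heisenberg model of the boundary. -/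
def stdQuad (A b₁ B b₂ : ℂ) : Fin 4 → Fin 3 → ℂ :=
  ![![A, b₁, 1], ![B, b₂, 1], ![0, 0, 1], ![1, 0, 0]]

lemma crossRatio_stdQuad (A b₁ B b₂ : ℂ) :
    let q := stdQuad A b₁ B b₂
    crossRatio (q 0) (q 1) (q 2) (q 3) = conj A / conj B ∧
      crossRatio (q 0) (q 2) (q 1) (q 3) = herm (q 1) (q 0) / B ∧
      crossRatio (q 1) (q 2) (q 0) (q 3) = herm (q 0) (q 1) / A := by
  refine ⟨?_, ?_, ?_⟩ <;> simp [crossRatio, stdQuad, herm]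

section StdQuad

variable {A b₁ B b₂ : ℂ}

lemma herm_stdQuad_zero_one : herm (stdQuad A b₁ B b₂ 0) (stdQuad A b₁ B b₂ 1) =
    A + b₁ * conj b₂ + conj B := by
  simp [stdQuad, herm]

lemma isNullLift_stdQuad (h₁ : normSq b₁ = -(2 * A.re)) (h₂ : normSq b₂ = -(2 * B.re))
    (i : Fin 4) : IsNullLift (stdQuad A b₁ B b₂ i) := by
  have hnull : ∀ a b : ℂ, normSq b = -(2 * a.re) → herm ![a, b, 1] ![a, b, 1] = 0 := by
    intro a b h
    simp only [herm, Matrix.cons_val, map_one, mul_one, one_mul, mul_conj, h]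
    rw [add_assoc, add_comm _ (conj a), ← add_assoc, add_conj]
    push_cast
    ring
  fin_cases i
  · exact ⟨fun h => by simpa [stdQuad] using congrFun h 2, hnull A b₁ h₁⟩
  · exact ⟨fun h => by simpa [stdQuad] using congrFun h 2, hnull B b₂ h₂⟩
  · exact ⟨fun h => by simpa [stdQuad] using congrFun h 2, by simp [stdQuad, herm]⟩
  · exact ⟨fun h => by simpa [stdQuad] using congrFun h 0, by simp [stdQuad, herm]⟩

lemma herm_stdQuad_ne_zero (hA : A ≠ 0) (hB : B ≠ 0)
    (h₀₁ : herm (stdQuad A b₁ B b₂ 0) (stdQuad A b₁ B b₂ 1) ≠ 0) (i j : Fin 4) (hij : i ≠ j) :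
    herm (stdQuad A b₁ B b₂ i) (stdQuad A b₁ B b₂ j) ≠ 0 := by
  have h₁₀ : herm (stdQuad A b₁ B b₂ 1) (stdQuad A b₁ B b₂ 0) ≠ 0 := by
    rwa [← conj_herm, map_ne_zero]
  fin_cases i <;> fin_cases j <;> simp_all [stdQuad, herm]

end StdQuad

/-- Every point of the cross-ratio variety 𝔛 is realized by a quadruple of
pairwise non-proportional null lifts with pairwise nonzero Hermitian products. -/
theorem exists_quadruple_of_mem_X (x₁ x₂ x₃ : ℂ) (hx : memX x₁ x₂ x₃) :
    ∃ p : Fin 4 → Fin 3 → ℂ,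
      (∀ i, IsNullLift (p i)) ∧
      (∀ i j, i ≠ j → ∀ c : ℂ, p i ≠ c • p j) ∧
      (∀ i j, i ≠ j → herm (p i) (p j) ≠ 0) ∧
      crossRatio (p 0) (p 1) (p 2) (p 3) = x₁ ∧
      crossRatio (p 0) (p 2) (p 1) (p 3) = x₂ ∧
      crossRatio (p 1) (p 2) (p 0) (p 3) = x₃ := by
  have ⟨hx₁, _, hx₃, _⟩ := hx
  obtain ⟨B, hB0, hB, hAre, hBre⟩ := hx.exists_re_nonpos
  set A := conj x₁ * B
  have hA0 : A ≠ 0 := mul_ne_zero ((map_ne_zero conj).mpr hx₁) hB0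
  obtain ⟨b₁, b₂, hb₁, hb₂, hb⟩ := exists_mul_conj_eq (a := -(2 * A.re)) (b := -(2 * B.re))
    (u := A * (x₃ - 1) - conj B) (by linarith) (by linarith)
    (by rw [hx.normSq_sub_eq hB]; ring)
  set q := stdQuad A b₁ B b₂
  have h₀₁ : herm (q 0) (q 1) = A * x₃ := by
    rw [herm_stdQuad_zero_one, hb]
    ring
  have hnull := isNullLift_stdQuad hb₁ hb₂
  have hne := herm_stdQuad_ne_zero hA0 hB0 (h₀₁ ▸ mul_ne_zero hA0 hx₃)
  obtain ⟨hX₁, hX₂, hX₃⟩ := crossRatio_stdQuad A b₁ B b₂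
  refine ⟨q, hnull, fun i j hij => (hnull j).ne_smul_of_herm_ne_zero (hne i j hij), hne,
    ?_, ?_, ?_⟩
  · rw [hX₁, map_mul, conj_conj, mul_div_cancel_right₀ _ ((map_ne_zero conj).mpr hB0)]
  · rw [hX₂, ← conj_herm, h₀₁, map_mul, map_mul, conj_conj, div_eq_iff hB0]
    linear_combination -hB
  · rw [hX₃, h₀₁, mul_div_cancel_left₀ _ hA0]
end
end

section
/- Let (p₁,p₂,p₃,p₄) and (p'₁,p'₂,p'₃,p'₄) be quadruples of pairwise non-proportional null lifts with ⟨pᵢ,pⱼ⟩ ≠ 0 and ⟨p'ᵢ,p'ⱼ⟩ ≠ 0 for i ≠ j, and assume each quadruple spans ℂ³ (i.e. neither quadruple of boundary points lies on a single ℂ-circle). Then there exist a ℂ-linear bijection g : ℂ³ → ℂ³ satisfying ⟨g v, g w⟩ = ⟨v,w⟩ for all v,w ∈ ℂ³ and nonzero scalars λ₁,…,λ₄ ∈ ℂ with g pⱼ = λⱼ·p'ⱼ for j = 1,2,3,4, if and only if 𝕏ᵢ(p₁,p₂,p₃,p₄) = 𝕏ᵢ(p'₁,p'₂,p'₃,p'₄)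 for i = 1,2,3. -/
noncomputable section

open Complex ComplexConjugate

/-!
An isometry of `herm` is pinned down on a spanning family by its Gram matrix, so it suffices to
find nonzero `λⱼ` with `λᵢ conj(λⱼ) ⟨p'ᵢ,p'ⱼ⟩ = ⟨pᵢ,pⱼ⟩`. With `rᵢⱼ = ⟨pᵢ,pⱼ⟩ / ⟨p'ᵢ,p'ⱼ⟩`, the
three cross-ratio equalities say that `conj(r₀ᵢ) r₀ⱼ / rᵢⱼ` has one common value `s` for all
`i ≠ j` in `{1,2,3}`; it is then real, and `λ₀ = √s`, `λⱼ = conj(r₀ⱼ) / √s` work once `s > 0`.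

Positivity: for null vectors the triple product `⟨x,y⟩⟨y,z⟩⟨z,x⟩` has real part
`-|det(x,y,z)|² / 2`. The triple product of `pⱼ, pᵢ, p₀` is `s |rᵢⱼ|²` times that of
`p'ⱼ, p'ᵢ, p'₀`; for a triple among the `pₖ` spanning `ℂ³` the left side has negative real part,
while the right side is `s |rᵢⱼ|²` times a number of nonpositive real part.
-/

lemma span_range_smul_eq_top {ι K V : Type*} [Field K] [AddCommGroup V] [Module K V]
    {v : ι → V} (hv : Submodule.span K (Set.range v) = ⊤) {c : ι → K} (hc : ∀ i, c i ≠ 0) :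
    Submodule.span K (Set.range fun i => c i • v i) = ⊤ := by
  rw [eq_top_iff, ← hv, Submodule.span_le]
  rintro _ ⟨i, rfl⟩
  rw [← inv_smul_smul₀ (hc i) (v i)]
  exact Submodule.smul_mem _ _ (Submodule.subset_span ⟨i, rfl⟩)

lemma LinearMap.exists_linearEquiv_apply_eq {R M N N' : Type*} [Ring R] [AddCommGroup M]
    [AddCommGroup N] [AddCommGroup N'] [Module R M] [Module R N] [Module R N']
    {f : M →ₗ[R] N} {f' : M →ₗ[R] N'} (hf : Function.Surjective f)
    (hf' : Function.Surjective f') (h : LinearMap.ker f = LinearMap.ker f') :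
    ∃ e : N ≃ₗ[R] N', ∀ x, e (f x) = f' x := by
  refine ⟨(f.quotKerEquivOfSurjective hf).symm ≪≫ₗ Submodule.quotEquivOfEq _ _ h ≪≫ₗ
    f'.quotKerEquivOfSurjective hf', fun x => ?_⟩
  have hx : (f.quotKerEquivOfSurjective hf).symm (f x) = Submodule.Quotient.mk x := by
    rw [LinearEquiv.symm_apply_eq]; rfl
  rw [LinearEquiv.trans_apply, LinearEquiv.trans_apply, hx]
  rfl

lemma exists_linearIndependent_triple {K V : Type*} [Field K] [AddCommGroup V] [Module K V]
    [FiniteDimensional K V] (hV : Module.finrank K V = 3) {p : Fin 4 → V}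
    (hp : Submodule.span K (Set.range p) = ⊤) (h01 : LinearIndependent K ![p 1, p 0]) :
    ∃ j, j ≠ 0 ∧ j ≠ 1 ∧ LinearIndependent K ![p j, p 1, p 0] := by
  by_contra! h
  have hmem (j : Fin 4) (hj0 : j ≠ 0) (hj1 : j ≠ 1) :
      p j ∈ Submodule.span K (Set.range ![p 1, p 0]) := by
    have hdep := h j hj0 hj1
    rw [show ![p j, p 1, p 0] = Fin.cons (p j) ![p 1, p 0] from rfl,
      linearIndependent_finCons] at hdep
    tauto
  have hle : Submodule.span K (Set.range p) ≤ Submodule.span K (Set.range ![p 1, p 0]) := by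
    rw [Submodule.span_le]
    rintro _ ⟨j, rfl⟩
    fin_cases j
    · exact Submodule.subset_span ⟨1, rfl⟩
    · exact Submodule.subset_span ⟨0, rfl⟩
    · exact hmem 2 (by decide) (by decide)
    · exact hmem 3 (by decide) (by decide)
  have hrank := (Submodule.finrank_mono hle).trans (finrank_range_le_card (R := K) ![p 1, p 0])
  rw [hp, finrank_top, hV] at hrank
  simp at hrank

lemma herm_swap (x y : Fin 3 → ℂ) : herm y x = conj (herm x y) := by
  simp only [herm, map_add, map_mul, conj_conj]; ring

lemma herm_smul_smul (c d : ℂ) (x y : Fin 3 → ℂ) :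
    herm (c • x) (d • y) = c * conj d * herm x y := by
  simp only [herm, Pi.smul_apply, smul_eq_mul, map_mul]; ring

lemma herm_zero_right (x : Fin 3 → ℂ) : herm x 0 = 0 := by
  simp [herm]

lemma eq_zero_of_forall_herm_eq_zero {v : Fin 3 → ℂ} (h : ∀ w, herm v w = 0) : v = 0 := by
  funext i
  fin_cases i
  · simpa [herm] using h ![0, 0, 1]
  · simpa [herm] using h ![0, 1, 0]
  · simpa [herm] using h ![1, 0, 0]

section LinearCombination

variable {ι : Type*} [Fintype ι]

lemma herm_linearCombination_left (v : ι → Fin 3 → ℂ) (x : ι → ℂ) (w : Fin 3 → ℂ) :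
    herm (Fintype.linearCombination ℂ v x) w = ∑ i, x i * herm (v i) w := by
  simp only [herm, Fintype.linearCombination_apply, Finset.sum_apply, Pi.smul_apply,
    smul_eq_mul, Finset.sum_mul, ← Finset.sum_add_distrib]
  exact Finset.sum_congr rfl fun i _ => by ring

lemma herm_linearCombination_right (w : Fin 3 → ℂ) (v : ι → Fin 3 → ℂ) (y : ι → ℂ) :
    herm w (Fintype.linearCombination ℂ v y) = ∑ j, conj (y j) * herm w (v j) := by
  rw [herm_swap, herm_linearCombination_left, map_sum]
  simp only [map_mul, ← herm_swap]

lemma herm_linearCombination_linearCombination (v : ι → Fin 3 → ℂ) (x y : ι → ℂ) :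
    herm (Fintype.linearCombination ℂ v x) (Fintype.linearCombination ℂ v y) =
      ∑ i, ∑ j, x i * conj (y j) * herm (v i) (v j) := by
  rw [herm_linearCombination_left]
  simp only [herm_linearCombination_right, Finset.mul_sum]
  exact Finset.sum_congr rfl fun i _ => Finset.sum_congr rfl fun j _ => by ring

lemma eq_zero_of_forall_herm_eq_zero_of_span_eq_top {v : Fin 3 → ℂ} {q : ι → Fin 3 → ℂ}
    (hq : Submodule.span ℂ (Set.range q) = ⊤) (h : ∀ j, herm v (q j) = 0) : v = 0 := by
  refine eq_zero_of_forall_herm_eq_zero fun w => ?_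
  obtain ⟨y, rfl⟩ : w ∈ LinearMap.range (Fintype.linearCombination ℂ q) := by
    simp [Fintype.range_linearCombination, hq]
  simp [herm_linearCombination_right, h]

lemma linearCombination_eq_zero_iff {q : ι → Fin 3 → ℂ}
    (hq : Submodule.span ℂ (Set.range q) = ⊤) (x : ι → ℂ) :
    Fintype.linearCombination ℂ q x = 0 ↔ ∀ j, ∑ i, x i * herm (q i) (q j) = 0 := by
  simp only [← herm_linearCombination_left]
  refine ⟨fun h j => ?_, eq_zero_of_forall_herm_eq_zero_of_span_eq_top hq⟩
  rw [h, herm_swap, herm_zero_right, map_zero]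

theorem exists_herm_isometry_of_gram_eq {p q : ι → Fin 3 → ℂ}
    (hp : Submodule.span ℂ (Set.range p) = ⊤) (hq : Submodule.span ℂ (Set.range q) = ⊤)
    (hgram : ∀ i j, herm (q i) (q j) = herm (p i) (p j)) :
    ∃ g : (Fin 3 → ℂ) ≃ₗ[ℂ] (Fin 3 → ℂ),
      (∀ v w, herm (g v) (g w) = herm v w) ∧ ∀ j, g (p j) = q j := by
  classical
  have surj {v : ι → Fin 3 → ℂ} (hv : Submodule.span ℂ (Set.range v) = ⊤) :
      Function.Surjective (Fintype.linearCombination ℂ v) := by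
    rw [← LinearMap.range_eq_top, Fintype.range_linearCombination, hv]
  have hker : LinearMap.ker (Fintype.linearCombination ℂ p) =
      LinearMap.ker (Fintype.linearCombination ℂ q) := by
    ext x
    simp only [LinearMap.mem_ker, linearCombination_eq_zero_iff hp,
      linearCombination_eq_zero_iff hq, hgram]
  obtain ⟨g, hg⟩ := LinearMap.exists_linearEquiv_apply_eq (surj hp) (surj hq) hker
  refine ⟨g, fun v w => ?_, fun j => ?_⟩
  · obtain ⟨x, rfl⟩ := surj hp v
    obtain ⟨y, rfl⟩ := surj hp w
    simp only [hg, herm_linearCombination_linearCombination, hgram]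
  · simpa using hg (Pi.single j 1)

end LinearCombination

lemma herm_mul_herm_mul_herm_add_conj (x y z : Fin 3 → ℂ) :
    herm x y * herm y z * herm z x + conj (herm x y * herm y z * herm z x) =
      herm x x * herm y z * herm z y + herm y y * herm z x * herm x z
        + herm z z * herm x y * herm y x - herm x x * herm y y * herm z z
        - (Matrix.of ![x, y, z]).det * conj (Matrix.of ![x, y, z]).det := by
  simp [herm, Matrix.det_fin_three]
  ring

lemma two_mul_re_herm_mul_herm_mul_herm {x y z : Fin 3 → ℂ} (hx : herm x x = 0)
    (hy : herm y y = 0) (hz : herm z z = 0) :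
    2 * (herm x y * herm y z * herm z x).re = -normSq (Matrix.of ![x, y, z]).det := by
  have h := herm_mul_herm_mul_herm_add_conj x y z
  rw [hx, hy, hz, add_conj, mul_conj] at h
  have h' : ((2 * (herm x y * herm y z * herm z x).re : ℝ) : ℂ) =
      ((-normSq (Matrix.of ![x, y, z]).det : ℝ) : ℂ) := by
    push_cast at h ⊢
    linear_combination h
  exact_mod_cast h'

lemma re_herm_mul_herm_mul_herm_nonpos {x y z : Fin 3 → ℂ} (hx : herm x x = 0)
    (hy : herm y y = 0) (hz : herm z z = 0) :
    (herm x y * herm y z * herm z x).re ≤ 0 := by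
  nlinarith [two_mul_re_herm_mul_herm_mul_herm hx hy hz, normSq_nonneg (Matrix.of ![x, y, z]).det]

lemma re_herm_mul_herm_mul_herm_neg {x y z : Fin 3 → ℂ} (hx : herm x x = 0)
    (hy : herm y y = 0) (hz : herm z z = 0) (hind : LinearIndependent ℂ ![x, y, z]) :
    (herm x y * herm y z * herm z x).re < 0 := by
  have hdet : (Matrix.of ![x, y, z]).det ≠ 0 := by
    rw [← isUnit_iff_ne_zero, ← Matrix.isUnit_iff_isUnit_det,
      ← Matrix.linearIndependent_rows_iff_isUnit]
    exact hind
  nlinarith [two_mul_re_herm_mul_herm_mul_herm hx hy hz, normSq_pos.2 hdet]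

lemma linearIndependent_pair_of_herm_ne_zero {x y : Fin 3 → ℂ} (hy : herm y y = 0)
    (hxy : herm x y ≠ 0) : LinearIndependent ℂ ![y, x] := by
  have hy0 : y ≠ 0 := by
    rintro rfl
    exact hxy (herm_zero_right x)
  refine (LinearIndependent.pair_iff' hy0).2 fun a hax => hxy ?_
  rw [← hax, ← one_smul ℂ y, herm_smul_smul, one_smul, hy, mul_zero]

lemma crossRatio_map {g : (Fin 3 → ℂ) → Fin 3 → ℂ} (hg : ∀ v w, herm (g v) (g w) = herm v w)
    (p q r s : Fin 3 → ℂ) : crossRatio (g p) (g q) (g r) (g s) = crossRatio p q r s := by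
  simp only [crossRatio, hg]

lemma crossRatio_smul {a b c d : ℂ} (ha : a ≠ 0) (hb : b ≠ 0) (hc : c ≠ 0) (hd : d ≠ 0)
    (p q r s : Fin 3 → ℂ) :
    crossRatio (a • p) (b • q) (c • r) (d • s) = crossRatio p q r s := by
  have hk : c * conj a * (d * conj b) ≠ 0 := by simp [ha, hb, hc, hd]
  simp only [crossRatio, herm_smul_smul]
  rw [← mul_div_mul_left (herm r p * herm s q) (herm s p * herm r q) hk]
  ring

section GramRatio

variable {ι : Type*} {p p' : ι → Fin 3 → ℂ}

def gramRatio (p p' : ι → Fin 3 → ℂ) (i j : ι) : ℂ :=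
  herm (p i) (p j) / herm (p' i) (p' j)

lemma gramRatio_swap (i j : ι) : gramRatio p p' j i = conj (gramRatio p p' i j) := by
  rw [gramRatio, gramRatio, herm_swap (p i), herm_swap (p' i), map_div₀]

lemma gramRatio_ne_zero (hne : ∀ i j, i ≠ j → herm (p i) (p j) ≠ 0)
    (hne' : ∀ i j, i ≠ j → herm (p' i) (p' j) ≠ 0) {i j : ι} (hij : i ≠ j) :
    gramRatio p p' i j ≠ 0 :=
  div_ne_zero (hne i j hij) (hne' i j hij)

lemma gramRatio_mul_gramRatio_of_crossRatio_eq (hne : ∀ i j, i ≠ j → herm (p i) (p j) ≠ 0)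
    (hne' : ∀ i j, i ≠ j → herm (p' i) (p' j) ≠ 0) {a b c d : ι}
    (h : crossRatio (p a) (p b) (p c) (p d) = crossRatio (p' a) (p' b) (p' c) (p' d))
    (hca : c ≠ a) (hdb : d ≠ b) (hda : d ≠ a) (hcb : c ≠ b) :
    gramRatio p p' c a * gramRatio p p' d b = gramRatio p p' d a * gramRatio p p' c b := by
  rw [crossRatio, crossRatio, div_eq_div_iff (mul_ne_zero (hne d a hda) (hne c b hcb))
    (mul_ne_zero (hne' d a hda) (hne' c b hcb))] at h
  simp only [gramRatio]
  field_simp [hne' c a hca, hne' d b hdb, hne' d a hda, hne' c b hcb]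
  linear_combination h

lemma pos_of_conj_gramRatio_mul_gramRatio_eq (hnull : ∀ i, herm (p i) (p i) = 0)
    (hnull' : ∀ i, herm (p' i) (p' i) = 0) (hne' : ∀ i j, i ≠ j → herm (p' i) (p' j) ≠ 0)
    {o i j : ι} (hio : i ≠ o) (hjo : j ≠ o) (hij : i ≠ j) {s : ℝ}
    (hs : conj (gramRatio p p' o i) * gramRatio p p' o j = s * gramRatio p p' i j)
    (hind : LinearIndependent ℂ ![p j, p i, p o]) : 0 < s := by
  have hG {a b : ι} (hab : a ≠ b) : herm (p a) (p b) = gramRatio p p' a b * herm (p' a) (p' b) :=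
    (div_mul_cancel₀ _ (hne' a b hab)).symm
  have htriple : herm (p j) (p i) * herm (p i) (p o) * herm (p o) (p j) =
      ((s * normSq (gramRatio p p' i j) : ℝ) : ℂ) *
        (herm (p' j) (p' i) * herm (p' i) (p' o) * herm (p' o) (p' j)) := by
    rw [hG hij.symm, hG hio, hG hjo.symm, gramRatio_swap o i, gramRatio_swap i j, ofReal_mul,
      ← mul_conj]
    linear_combination (conj (gramRatio p p' i j) * herm (p' j) (p' i) * herm (p' i) (p' o) *
      herm (p' o) (p' j)) * hs
  have hneg := re_herm_mul_herm_mul_herm_neg (hnull j) (hnull i) (hnull o) hind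
  have hnonpos := re_herm_mul_herm_mul_herm_nonpos (hnull' j) (hnull' i) (hnull' o)
  rw [htriple, re_ofReal_mul] at hneg
  by_contra! hs0
  exact hneg.not_ge (mul_nonneg_of_nonpos_of_nonpos
    (mul_nonpos_of_nonpos_of_nonneg hs0 (normSq_nonneg _)) hnonpos)

lemma herm_smul_smul_eq_of_mul_conj_eq_gramRatio (hnull : ∀ i, herm (p i) (p i) = 0)
    (hnull' : ∀ i, herm (p' i) (p' i) = 0) (hne' : ∀ i j, i ≠ j → herm (p' i) (p' j) ≠ 0)
    {lam : ι → ℂ} (hlam : ∀ i j, i ≠ j → lam i * conj (lam j) = gramRatio p p' i j) (i j : ι) :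
    herm (lam i • p' i) (lam j • p' j) = herm (p i) (p j) := by
  rw [herm_smul_smul]
  rcases eq_or_ne i j with rfl | hij
  · rw [hnull, hnull', mul_zero]
  · rw [hlam i j hij, gramRatio, div_mul_cancel₀ _ (hne' i j hij)]

end GramRatio

lemma exists_real_conj_mul_eq {r : Fin 4 → Fin 4 → ℂ} (hr : ∀ i j, r j i = conj (r i j))
    (h12 : r 1 2 ≠ 0) (h23 : r 2 3 ≠ 0) (h₁ : r 2 0 * r 3 1 = r 3 0 * r 2 1)
    (h₂ : r 1 0 * r 3 2 = r 3 0 * r 1 2) (h₃ : r 0 1 * r 3 2 = r 3 1 * r 0 2) :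
    ∃ s : ℝ, ∀ i j, i ≠ 0 → j ≠ 0 → i ≠ j → conj (r 0 i) * r 0 j = s * r i j := by
  rw [hr 0 2, hr 1 3, hr 0 3, hr 1 2] at h₁
  rw [hr 0 1, hr 2 3, hr 0 3] at h₂
  rw [hr 2 3, hr 1 3] at h₃
  have h₁' : r 0 2 * r 1 3 = r 0 3 * r 1 2 := by
    simpa only [map_mul, conj_conj] using congrArg conj h₁
  set S := conj (r 0 1) * r 0 2 / r 1 2 with hS
  have hSreal : conj S = S := by
    have hc12 : conj (r 1 2) ≠ 0 := (map_ne_zero _).2 h12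
    rw [hS, map_div₀, map_mul, conj_conj, div_eq_div_iff hc12 h12]
    apply mul_right_cancel₀ (b := conj (r 2 3)) ((map_ne_zero _).2 h23)
    linear_combination (conj (r 0 2) * r 1 2) * h₃ - (r 0 2 * conj (r 1 2)) * h₂
      + (r 0 2 * r 1 2) * h₁
  have p12 : conj (r 0 1) * r 0 2 = S * r 1 2 := (div_mul_cancel₀ _ h12).symm
  have p13 : conj (r 0 1) * r 0 3 = S * r 1 3 := by
    rw [hS, div_mul_eq_mul_div, eq_div_iff h12]
    linear_combination -conj (r 0 1) * h₁'
  have p31 : conj (r 0 3) * r 0 1 = S * r 3 1 := by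
    rw [hS, hr 1 3, div_mul_eq_mul_div, eq_div_iff h12]
    linear_combination conj (r 0 1) * h₃ - r 0 1 * h₂
  have p32 : conj (r 0 3) * r 0 2 = S * r 3 2 := by
    rw [hS, hr 2 3, div_mul_eq_mul_div, eq_div_iff h12]
    linear_combination - r 0 2 * h₂
  have conj_pair {i j : Fin 4} (h : conj (r 0 i) * r 0 j = S * r i j) :
      conj (r 0 j) * r 0 i = S * r j i := by
    rw [hr i j, ← hSreal]
    simpa only [map_mul, conj_conj, mul_comm] using congrArg conj h
  refine ⟨S.re, fun i j hi hj hij => ?_⟩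
  rw [conj_eq_iff_re.1 hSreal]
  fin_cases i <;> fin_cases j <;>
    simp only [Fin.zero_eta, Fin.mk_one, Fin.reduceFinMk] at hi hj hij ⊢
  all_goals first
    | exact absurd rfl hi | exact absurd rfl hj | exact absurd rfl hij
    | assumption | exact conj_pair ‹_›

lemma exists_mul_conj_eq_s2 {ι : Type*} [DecidableEq ι] {r : ι → ι → ℂ} {o : ι}
    (hr : ∀ i, r i o = conj (r o i)) (hr0 : ∀ j, j ≠ o → r o j ≠ 0) {s : ℝ} (hs : 0 < s)
    (hrs : ∀ i j, i ≠ o → j ≠ o → i ≠ j → conj (r o i) * r o j = s * r i j) :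
    ∃ lam : ι → ℂ, (∀ j, lam j ≠ 0) ∧ ∀ i j, i ≠ j → lam i * conj (lam j) = r i j := by
  set σ : ℂ := ((√s : ℝ) : ℂ)
  have hσ : σ ≠ 0 := ofReal_ne_zero.2 (Real.sqrt_pos.2 hs).ne'
  have hσc : conj σ = σ := conj_ofReal _
  have hσσ : σ * σ = s := by rw [← ofReal_mul, Real.mul_self_sqrt hs.le]
  set lam : ι → ℂ := fun j => if j = o then σ else conj (r o j) / σ
  have hlam_o : lam o = σ := if_pos rfl
  have hlam {j : ι} (hj : j ≠ o) : lam j = conj (r o j) / σ := if_neg hj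
  refine ⟨lam, fun j => ?_, fun i j hij => ?_⟩
  · rcases eq_or_ne j o with rfl | hj
    · rwa [hlam_o]
    · rw [hlam hj]
      exact div_ne_zero ((map_ne_zero _).2 (hr0 j hj)) hσ
  by_cases hi : i = o <;> by_cases hj : j = o
  · exact absurd (hi.trans hj.symm) hij
  · rw [hi, hlam_o, hlam hj, map_div₀, conj_conj, hσc, mul_div_cancel₀ _ hσ]
  · rw [hj, hlam_o, hlam hi, hσc, div_mul_cancel₀ _ hσ, hr]
  · rw [hlam hi, hlam hj, map_div₀, conj_conj, hσc, div_mul_div_comm, hσσ, hrs i j hi hj hij,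
      mul_div_cancel_left₀ _ (ofReal_ne_zero.2 hs.ne')]

theorem isometric_iff_crossRatios_eq_general (p p' : Fin 4 → Fin 3 → ℂ)
    (hnull : ∀ i, IsNullLift (p i)) (hnull' : ∀ i, IsNullLift (p' i))
    (hne : ∀ i j, i ≠ j → herm (p i) (p j) ≠ 0)
    (hne' : ∀ i j, i ≠ j → herm (p' i) (p' j) ≠ 0)
    (hspan : Submodule.span ℂ (Set.range p) = ⊤)
    (hspan' : Submodule.span ℂ (Set.range p') = ⊤) :
    (∃ g : (Fin 3 → ℂ) ≃ₗ[ℂ] (Fin 3 → ℂ),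
        (∀ v w, herm (g v) (g w) = herm v w) ∧
        ∃ lam : Fin 4 → ℂ, (∀ j, lam j ≠ 0) ∧ ∀ j, g (p j) = lam j • p' j) ↔
      (crossRatio (p 0) (p 1) (p 2) (p 3) = crossRatio (p' 0) (p' 1) (p' 2) (p' 3) ∧
       crossRatio (p 0) (p 2) (p 1) (p 3) = crossRatio (p' 0) (p' 2) (p' 1) (p' 3) ∧
       crossRatio (p 1) (p 2) (p 0) (p 3) = crossRatio (p' 1) (p' 2) (p' 0) (p' 3)) := by
  constructor
  · rintro ⟨g, hg, lam, hlam, hgp⟩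
    have key (a b c d : Fin 4) :
        crossRatio (p a) (p b) (p c) (p d) = crossRatio (p' a) (p' b) (p' c) (p' d) := by
      rw [← crossRatio_map hg, hgp, hgp, hgp, hgp,
        crossRatio_smul (hlam a) (hlam b) (hlam c) (hlam d)]
    exact ⟨key 0 1 2 3, key 0 2 1 3, key 1 2 0 3⟩
  · rintro ⟨h₁, h₂, h₃⟩
    have hp (i : Fin 4) : herm (p i) (p i) = 0 := (hnull i).2
    have hp' (i : Fin 4) : herm (p' i) (p' i) = 0 := (hnull' i).2
    have hr0 {i j : Fin 4} (hij : i ≠ j) := gramRatio_ne_zero hne hne' hij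
    obtain ⟨s, hs⟩ := exists_real_conj_mul_eq gramRatio_swap (hr0 (by decide)) (hr0 (by decide))
      (gramRatio_mul_gramRatio_of_crossRatio_eq hne hne' h₁
        (by decide) (by decide) (by decide) (by decide))
      (gramRatio_mul_gramRatio_of_crossRatio_eq hne hne' h₂
        (by decide) (by decide) (by decide) (by decide))
      (gramRatio_mul_gramRatio_of_crossRatio_eq hne hne' h₃
        (by decide) (by decide) (by decide) (by decide))
    obtain ⟨j, hj0, hj1, hind⟩ := exists_linearIndependent_triple (by simp) hspan
      (linearIndependent_pair_of_herm_ne_zero (hp 1) (hne 0 1 (by decide)))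
    have hs_pos := pos_of_conj_gramRatio_mul_gramRatio_eq hp hp' hne' one_ne_zero hj0 hj1.symm
      (hs 1 j one_ne_zero hj0 hj1.symm) hind
    obtain ⟨lam, hlam0, hlam⟩ := exists_mul_conj_eq_s2 (fun i => gramRatio_swap 0 i)
      (fun _ hj => hr0 hj.symm) hs_pos hs
    obtain ⟨g, hg, hgp⟩ := exists_herm_isometry_of_gram_eq hspan
      (span_range_smul_eq_top hspan' hlam0)
      (herm_smul_smul_eq_of_mul_conj_eq_gramRatio hp hp' hne' hlam)
    exact ⟨g, hg, lam, hlam0, hgp⟩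

/-- Two quadruples of null lifts in general position (each spanning ℂ³, i.e. not
lying on a common ℂ-circle) are equivalent under a Hermitian-form-preserving
linear bijection (up to nonzero scalars on lifts) if and only if they have the
same three cross-ratios. -/
theorem isometric_iff_crossRatios_eq (p p' : Fin 4 → Fin 3 → ℂ)
    (hnull : ∀ i, IsNullLift (p i)) (hnull' : ∀ i, IsNullLift (p' i))
    (hprop : ∀ i j, i ≠ j → ∀ c : ℂ, p i ≠ c • p j)
    (hprop' : ∀ i j, i ≠ j → ∀ c : ℂ, p' i ≠ c • p' j)
    (hne : ∀ i j, i ≠ j → herm (p i) (p j) ≠ 0)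
    (hne' : ∀ i j, i ≠ j → herm (p' i) (p' j) ≠ 0)
    (hspan : Submodule.span ℂ (Set.range p) = ⊤)
    (hspan' : Submodule.span ℂ (Set.range p') = ⊤) :
    (∃ g : (Fin 3 → ℂ) ≃ₗ[ℂ] (Fin 3 → ℂ),
        (∀ v w, herm (g v) (g w) = herm v w) ∧
        ∃ lam : Fin 4 → ℂ, (∀ j, lam j ≠ 0) ∧ ∀ j, g (p j) = lam j • p' j) ↔
      (crossRatio (p 0) (p 1) (p 2) (p 3) = crossRatio (p' 0) (p' 1) (p' 2) (p' 3) ∧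
       crossRatio (p 0) (p 2) (p 1) (p 3) = crossRatio (p' 0) (p' 2) (p' 1) (p' 3) ∧
       crossRatio (p 1) (p 2) (p 0) (p 3) = crossRatio (p' 1) (p' 2) (p' 0) (p' 3)) :=
  isometric_iff_crossRatios_eq_general p p' hnull hnull' hne hne' hspan hspan'
end
end

section
/- Define F : ℂ³ → ℝ² by F(x₁,x₂,x₃) = (|x₂|² − |x₁|²·|x₃|², |x₁|² + |x₂|² − 2·Re(x₁+x₂) + 1 − 2·|x₁|²·Re(x₃)). Then for every point p = (x₁,x₂,x₃) of 𝔛, the real Fréchet derivative of F at p is a surjective ℝ-linear map onto ℝ² if and only if p ∉ 𝔛_ℝ. (Consequently 𝔛 ∖ 𝔛_ℝ is a 4-dimensional smooth real submanifold of ℂ³.) -/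
/-!
The derivative of `Fdef` at `(a, b, c)` is `q ↦ (ℓ₁ q, ℓ₂ q)` with `ℓ₂ (0, 0, 1) = -2‖a‖² ≠ 0`,
so it fails to be surjective exactly when `ℓ₁ = t ℓ₂` for some real `t`. The functional
`ℓ₁ - t ℓ₂` is `2 (⟪u, q₁⟫ + ⟪v, q₂⟫ + ⟪w, q₃⟫)` for explicit `u, v, w`, and these vanish iff
`c = t` is real, `(1 - t) b + t = 0` and `(t² - t) a + t = 0`. On `𝔛` these equations say
`a = 1 / (1 - t)`, `b = t / (t - 1)`, `c = t`, which is exactly a point of `𝔛_ℝ`.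
-/

noncomputable section

open Complex

/-- The real singular set 𝔛_ℝ. -/
def memXR (x₁ x₂ x₃ : ℂ) : Prop :=
  memX x₁ x₂ x₃ ∧ x₁.im = 0 ∧ x₂.im = 0 ∧ x₃.im = 0 ∧
  x₁ + x₂ = 1 ∧ 1 / x₂ + 1 / x₃ = 1 ∧ x₃ + 1 / x₁ = 1

/-- The pair of real defining functions of 𝔛. -/
def Fdef (x : ℂ × ℂ × ℂ) : ℝ × ℝ :=
  ((‖x.2.1‖) ^ 2 - (‖x.1‖) ^ 2 * (‖x.2.2‖) ^ 2,
   (‖x.1‖) ^ 2 + (‖x.2.1‖) ^ 2 - 2 * (x.1 + x.2.1).re + 1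
     - 2 * (‖x.1‖) ^ 2 * x.2.2.re)

open scoped InnerProductSpace

namespace LinearMap

variable {K E : Type*} [Field K] [AddCommGroup E] [Module K E]

lemma surjective_of_det_ne_zero (L : E →ₗ[K] K × K) {u v : E}
    (h : (L u).1 * (L v).2 - (L u).2 * (L v).1 ≠ 0) : Function.Surjective L := by
  intro y
  set d := (L u).1 * (L v).2 - (L u).2 * (L v).1
  refine ⟨((y.1 * (L v).2 - y.2 * (L v).1) / d) • u + ((y.2 * (L u).1 - y.1 * (L u).2) / d) • v, ?_⟩
  ext <;> simp only [map_add, map_smul, Prod.fst_add, Prod.snd_add, Prod.smul_fst, Prod.smul_snd,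
    smul_eq_mul] <;> field_simp <;> ring

lemma surjective_iff_not_exists_fst_eq_mul_snd (L : E →ₗ[K] K × K) {v : E} (hv : (L v).2 ≠ 0) :
    Function.Surjective L ↔ ¬ ∃ t : K, ∀ q, (L q).1 = t * (L q).2 := by
  refine ⟨fun hL ⟨t, ht⟩ => ?_, fun h => ?_⟩
  · obtain ⟨q, hq⟩ := hL (1, 0)
    simpa [hq] using ht q
  · simp only [not_exists, not_forall] at h
    obtain ⟨u, hu⟩ := h ((L v).1 / (L v).2)
    refine L.surjective_of_det_ne_zero (u := u) (v := v) fun hdet => hu ?_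
    field_simp
    linear_combination hdet

end LinearMap

lemma forall_inner_add_inner_add_inner_eq_zero_iff {E F G : Type*}
    [NormedAddCommGroup E] [InnerProductSpace ℝ E] [NormedAddCommGroup F] [InnerProductSpace ℝ F]
    [NormedAddCommGroup G] [InnerProductSpace ℝ G] {u : E} {v : F} {w : G} :
    (∀ q : E × F × G, ⟪u, q.1⟫_ℝ + ⟪v, q.2.1⟫_ℝ + ⟪w, q.2.2⟫_ℝ = 0) ↔ u = 0 ∧ v = 0 ∧ w = 0 := by
  refine ⟨fun h => ⟨?_, ?_, ?_⟩, ?_⟩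
  · simpa using h (u, 0, 0)
  · simpa using h (0, v, 0)
  · simpa using h (0, 0, w)
  · rintro ⟨rfl, rfl, rfl⟩ q
    simp

open ContinuousLinearMap in
lemma fderiv_Fdef_apply (p q : ℂ × ℂ × ℂ) :
    fderiv ℝ Fdef p q =
      (2 * ⟪p.2.1, q.2.1⟫_ℝ - 2 * ‖p.2.2‖ ^ 2 * ⟪p.1, q.1⟫_ℝ - 2 * ‖p.1‖ ^ 2 * ⟪p.2.2, q.2.2⟫_ℝ,
       2 * ⟪p.1, q.1⟫_ℝ + 2 * ⟪p.2.1, q.2.1⟫_ℝ - 2 * (q.1 + q.2.1).re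
         - 4 * p.2.2.re * ⟪p.1, q.1⟫_ℝ - 2 * ‖p.1‖ ^ 2 * q.2.2.re) := by
  have h₁ : HasFDerivAt (fun x : ℂ × ℂ × ℂ => x.1) (fst ℝ ℂ (ℂ × ℂ)) p := hasFDerivAt_fst
  have h₂ : HasFDerivAt (fun x : ℂ × ℂ × ℂ => x.2.1) ((fst ℝ ℂ ℂ).comp (snd ℝ ℂ (ℂ × ℂ))) p :=
    hasFDerivAt_fst.comp p hasFDerivAt_snd
  have h₃ : HasFDerivAt (fun x : ℂ × ℂ × ℂ => x.2.2) ((snd ℝ ℂ ℂ).comp (snd ℝ ℂ (ℂ × ℂ))) p :=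
    hasFDerivAt_snd.comp p hasFDerivAt_snd
  have hre₁₂ := reCLM.hasFDerivAt.comp p (h₁.add h₂)
  have hre₃ := reCLM.hasFDerivAt.comp p h₃
  have hF := (h₂.norm_sq.sub (h₁.norm_sq.mul h₃.norm_sq)).prodMk
    ((((h₁.norm_sq.add h₂.norm_sq).sub (hre₁₂.const_mul 2)).add_const 1).sub
      ((h₁.norm_sq.const_mul 2).mul hre₃))
  have hFdef : HasFDerivAt Fdef _ p := hF.congr_of_eventuallyEq (.of_forall fun _ => rfl)
  rw [hFdef.fderiv]
  simp only [comp_add, smul_add, Function.comp_apply, reCLM_apply, prod_apply, sub_apply,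
    smul_apply, comp_apply, coe_snd', coe_fst', coe_innerSL_apply, nsmul_eq_mul, add_apply,
    smul_eq_mul, add_re, Prod.mk.injEq]
  constructor <;> ring

lemma fderiv_Fdef_fst_sub_mul_snd (a b c : ℂ) (t : ℝ) (q : ℂ × ℂ × ℂ) :
    (fderiv ℝ Fdef (a, b, c) q).1 - t * (fderiv ℝ Fdef (a, b, c) q).2 =
      2 * (⟪(2 * t * c.re - t - ‖c‖ ^ 2) • a + t, q.1⟫_ℝ + ⟪(1 - t) • b + t, q.2.1⟫_ℝ
        + ⟪-‖a‖ ^ 2 • (c - t), q.2.2⟫_ℝ) := by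
  simp only [fderiv_Fdef_apply, inner_add_left, inner_sub_left, real_inner_smul_left]
  simp only [Complex.inner, conj_ofReal, re_mul_ofReal, add_re]
  ring

lemma fderiv_Fdef_fst_eq_mul_snd_iff {a b c : ℂ} (ha : a ≠ 0) (t : ℝ) :
    (∀ q, (fderiv ℝ Fdef (a, b, c) q).1 = t * (fderiv ℝ Fdef (a, b, c) q).2) ↔
      c = t ∧ (1 - t) • b + t = 0 ∧ (t ^ 2 - t) • a + t = 0 := by
  simp_rw [← sub_eq_zero (a := (fderiv ℝ Fdef _ _).1), fderiv_Fdef_fst_sub_mul_snd,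
    mul_eq_zero, two_ne_zero, false_or, forall_inner_add_inner_add_inner_eq_zero_iff]
  have hcoeff : 2 * t * (t : ℂ).re - t - ‖(t : ℂ)‖ ^ 2 = t ^ 2 - t := by simp; ring
  constructor
  · rintro ⟨hu, hv, hw⟩
    obtain rfl : c = t := by simpa [ha, sub_eq_zero] using hw
    exact ⟨rfl, hv, by rwa [hcoeff] at hu⟩
  · rintro ⟨rfl, hv, hu⟩
    exact ⟨by rwa [hcoeff], hv, by simp⟩

lemma memXR_iff_exists_real {a b c : ℂ} (h : memX a b c) :
    memXR a b c ↔ ∃ t : ℝ, c = t ∧ (1 - t) • b + t = 0 ∧ (t ^ 2 - t) • a + t = 0 := by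
  simp only [real_smul]
  push_cast
  constructor
  · rintro ⟨-, -, -, hc_im, -, hbc, hca⟩
    obtain ⟨ha, hb, hc, -⟩ := h
    have hc_re : c = c.re := ext rfl (by simp [hc_im])
    refine ⟨c.re, hc_re, ?_, ?_⟩ <;> rw [← hc_re] <;> field_simp at hbc hca
    · linear_combination hbc
    · linear_combination c * hca
  · rintro ⟨t, rfl, hbt, hat⟩
    have ht : (t : ℂ) ≠ 0 := h.2.2.1
    have hat' : ((t : ℂ) - 1) * a + 1 = 0 := by
      refine (mul_eq_zero.1 ?_).resolve_left ht
      linear_combination hat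
    have ht1 : (t : ℂ) - 1 ≠ 0 := by
      intro h1
      simp [h1] at hat'
    have ht1' : (1 : ℂ) - t ≠ 0 := by rwa [← neg_sub, neg_ne_zero]
    obtain rfl : a = ((1 - t)⁻¹ : ℝ) := by
      push_cast
      field_simp
      linear_combination -hat'
    obtain rfl : b = (t / (t - 1) : ℝ) := by
      push_cast
      field_simp
      linear_combination -hbt
    refine ⟨h, ofReal_im _, ofReal_im _, ofReal_im _, ?_, ?_, ?_⟩ <;>
      push_cast <;> field_simp <;> ring

/-- At a point of 𝔛, the real Fréchet derivative of the defining map `Fdef` is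
surjective onto ℝ² if and only if the point does not lie in the real singular
set 𝔛_ℝ. -/
theorem fderiv_surjective_iff_not_memXR (p : ℂ × ℂ × ℂ)
    (hp : memX p.1 p.2.1 p.2.2) :
    Function.Surjective (fderiv ℝ Fdef p) ↔ ¬ memXR p.1 p.2.1 p.2.2 := by
  obtain ⟨a, b, c⟩ := p
  have ha : a ≠ 0 := hp.1
  have hv : (fderiv ℝ Fdef (a, b, c) (0, 0, 1)).2 ≠ 0 := by simp [fderiv_Fdef_apply, ha]
  refine ((fderiv ℝ Fdef (a, b, c)).toLinearMap.surjective_iff_not_exists_fst_eq_mul_snd hv).trans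
    (not_congr ?_)
  simp_rw [ContinuousLinearMap.coe_coe, fderiv_Fdef_fst_eq_mul_snd_iff ha, memXR_iff_exists_real hp]
end
end

section
/- Let ζ₁, ζ₂ ∈ ℂ be nonzero and suppose (|ζ₁| − |ζ₂|)² = 2·Re(ζ₁) + 2·Re(ζ₂) − 1 (i.e. (ζ₁,ζ₂) lies on the boundary hypersurface of the domain 𝒫). Then |ζ₁|·|ζ₂| + Re(ζ₁·conj(ζ₂)) = 0 if and only if ζ₁ + ζ₂ = 1; consequently, if ζ₁ + ζ₂ ≠ 1, the Levi form L(ζ₁,ζ₂) = 1 + Re(ζ₁·conj(ζ₂))/(|ζ₁|·|ζ₂|) is strictly positive, so the boundary of 𝒫 is Levi strictly pseudoconvex away from the set {ζ₁, ζ₂ real, ζ₁ + ζ₂ = 1}. -/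
/-!
On the hypersurface the defining function `(|ζ₁| - |ζ₂|)² - 2 Re(ζ₁ + ζ₂) + 1` vanishes, and
`|ζ₁ + ζ₂ - 1|²` differs from it by exactly `2 (|ζ₁| |ζ₂| + Re(ζ₁ conj ζ₂))`. Hence the numerator of
the Levi form is half a squared norm: it vanishes only where `ζ₁ + ζ₂ = 1` and is positive elsewhere.
-/

open Complex ComplexConjugate

theorem sq_norm_add_sub_one_eq (z w : ℂ) :
    ‖z + w - 1‖ ^ 2 =
      (‖z‖ - ‖w‖) ^ 2 - 2 * (z + w).re + 1 + 2 * (‖z‖ * ‖w‖ + (z * conj w).re) := by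
  have hz : ‖z‖ ^ 2 = z.re * z.re + z.im * z.im := by
    rw [Complex.sq_norm, normSq_apply]
  have hw : ‖w‖ ^ 2 = w.re * w.re + w.im * w.im := by
    rw [Complex.sq_norm, normSq_apply]
  simp only [Complex.sq_norm, normSq_apply, mul_re, conj_re,
    conj_im, add_re, add_im, sub_re, sub_im,
    one_re, one_im]
  linear_combination -hz - hw

theorem two_mul_norm_mul_norm_add_re_mul_conj_eq {z w : ℂ}
    (h : (‖z‖ - ‖w‖) ^ 2 = 2 * z.re + 2 * w.re - 1) :
    2 * (‖z‖ * ‖w‖ + (z * conj w).re) = ‖z + w - 1‖ ^ 2 := by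
  rw [sq_norm_add_sub_one_eq, add_re]
  linarith

/-- On the boundary hypersurface of the domain 𝒫, the Levi form
`L = 1 + Re(ζ₁·conj ζ₂)/(|ζ₁|·|ζ₂|)` vanishes exactly on the line
`ζ₁ + ζ₂ = 1`, and is strictly positive elsewhere. -/
theorem levi_strictly_pseudoconvex (ζ₁ ζ₂ : ℂ) (h₁ : ζ₁ ≠ 0) (h₂ : ζ₂ ≠ 0)
    (hbd : (norm ζ₁ - norm ζ₂) ^ 2 = 2 * ζ₁.re + 2 * ζ₂.re - 1) :
    (norm ζ₁ * norm ζ₂ + (ζ₁ * conj ζ₂).re = 0 ↔ ζ₁ + ζ₂ = 1) ∧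
    (ζ₁ + ζ₂ ≠ 1 →
      0 < 1 + (ζ₁ * conj ζ₂).re / (norm ζ₁ * norm ζ₂)) := by
  have hnum := two_mul_norm_mul_norm_add_re_mul_conj_eq hbd
  have hiff : ‖ζ₁‖ * ‖ζ₂‖ + (ζ₁ * conj ζ₂).re = 0 ↔ ζ₁ + ζ₂ = 1 := by
    calc _ ↔ ‖ζ₁ + ζ₂ - 1‖ ^ 2 = 0 := by rw [← hnum, mul_eq_zero, or_iff_right two_ne_zero]
      _ ↔ ζ₁ + ζ₂ = 1 := by rw [sq_eq_zero_iff, norm_eq_zero, sub_eq_zero]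
  refine ⟨hiff, fun hne => ?_⟩
  have hden : 0 < ‖ζ₁‖ * ‖ζ₂‖ := mul_pos (norm_pos_iff.mpr h₁) (norm_pos_iff.mpr h₂)
  have hpos : 0 < ‖ζ₁‖ * ‖ζ₂‖ + (ζ₁ * conj ζ₂).re :=
    lt_of_le_of_ne (by linarith [sq_nonneg ‖ζ₁ + ζ₂ - 1‖]) (Ne.symm (mt hiff.mp hne))
  rw [one_add_div hden.ne']
  exact div_pos hpos hden
end
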